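/- arXiv:2405.09532 — 7 statements merged into one kernel-verified Lean document; each statement's English description precedes it below -/
import Mathlib

section
/- Let A be an associative unital ℝ-algebra, let n be a real number, and let L, Q, T ∈ A satisfy L*Q − Q*L = 4•T + (2n+4)•1 and L*T − T*L = 2•L. Then for every integer ℓ ≥ 1 one has L^ℓ*Q − Q*L^ℓ = (2ℓ)•(L^(ℓ−1)*(2•T + (n+4−2ℓ)•1)). -/
/-!
Conjugating by `L` shifts `T` by a multiple of `L`, so `T * L ^ k = L ^ k * T - 2k • L ^ k`.
Expanding `[L ^ (k + 1), Q] = L * [L ^ k, Q] + [L, Q] * L ^ k` and moving the `T` coming from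
`[L, Q]` to the right of `L ^ k` with this rule gives the identity by induction on `ℓ`; the
correction terms `2k • L ^ k` add up to the quadratic term `-4ℓ(ℓ - 1)` in the constant.
-/

section

variable {R A : Type*} [CommRing R] [Ring A] [Algebra R A]

theorem pow_succ_mul_sub_mul_pow_succ (L Q : A) (k : ℕ) :
    L ^ (k + 1) * Q - Q * L ^ (k + 1) = L * (L ^ k * Q - Q * L ^ k) + (L * Q - Q * L) * L ^ k := by
  rw [pow_succ']
  noncomm_ring

theorem mul_pow_eq_pow_mul_sub_of_mul_sub_mul_eq_smul {L T : A} {c : R}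
    (hLT : L * T - T * L = c • L) (k : ℕ) :
    T * L ^ k = L ^ k * T - ((k : R) * c) • L ^ k := by
  induction k with
  | zero => simp
  | succ k ih =>
    have hTL : T * L = L * T - c • L := by rw [← hLT]; abel
    calc T * L ^ (k + 1) = (T * L ^ k) * L := by rw [pow_succ, mul_assoc]
      _ = L ^ k * (T * L) - ((k : R) * c) • L ^ (k + 1) := by
          rw [ih, sub_mul, smul_mul_assoc, mul_assoc, pow_succ]
      _ = L ^ (k + 1) * T - (((k + 1 : ℕ) : R) * c) • L ^ (k + 1) := by
          rw [hTL, mul_sub, mul_smul_comm, ← mul_assoc, ← pow_succ]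
          push_cast
          module

theorem pow_succ_mul_sub_mul_pow_succ_of_commutators (n : R) {L Q T : A}
    (hLQ : L * Q - Q * L = (4 : R) • T + (2 * n + 4) • (1 : A))
    (hLT : L * T - T * L = (2 : R) • L) (k : ℕ) :
    L ^ (k + 1) * Q - Q * L ^ (k + 1) =
      (2 * ((k + 1 : ℕ) : R)) • (L ^ k * ((2 : R) • T + (n + 4 - 2 * ((k + 1 : ℕ) : R)) • (1 : A))) := by
  induction k with
  | zero =>
    rw [zero_add, pow_one, hLQ]
    simp only [pow_zero, one_mul, Nat.cast_one]
    module
  | succ k ih =>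
    rw [pow_succ_mul_sub_mul_pow_succ, ih, hLQ, add_mul, smul_mul_assoc,
      mul_pow_eq_pow_mul_sub_of_mul_sub_mul_eq_smul hLT, smul_mul_assoc, mul_smul_comm,
      ← mul_assoc, ← pow_succ']
    push_cast
    simp only [mul_add, mul_sub, mul_one, one_mul, smul_add, smul_sub, smul_smul, mul_smul_comm]
    match_scalars <;> ring

end

/-- Commutator identity `[L^ℓ, Q] = 2ℓ • L^(ℓ-1) * (2•T + (n+4-2ℓ)•1)` in an
associative unital ℝ-algebra, modelling `[Δ̃^ℓ, Q]` on the ambient space. -/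
theorem pow_commutator_identity {A : Type*} [Ring A] [Algebra ℝ A]
    (n : ℝ) (L Q T : A)
    (hLQ : L * Q - Q * L = (4 : ℝ) • T + (2 * n + 4) • (1 : A))
    (hLT : L * T - T * L = (2 : ℝ) • L) :
    ∀ ℓ : ℕ, 1 ≤ ℓ →
      L ^ ℓ * Q - Q * L ^ ℓ =
        (2 * (ℓ : ℝ)) • (L ^ (ℓ - 1) * ((2 : ℝ) • T + (n + 4 - 2 * (ℓ : ℝ)) • (1 : A))) := by
  intro ℓ hℓ
  obtain ⟨k, rfl⟩ := Nat.exists_eq_add_of_le' hℓ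
  simpa using pow_succ_mul_sub_mul_pow_succ_of_commutators n hLQ hLT k
end

section
/- Let R be a commutative ℝ-algebra, let L : R → R be an ℝ-linear map, let T : R → R be an ℝ-linear derivation (T(ab) = T(a)b + aT(b)), let q ∈ R, and let n be a fixed real number. Assume: (i) for every integer ℓ ≥ 1 and every m ∈ R, L^ℓ(q·m) − q·L^ℓ(m) = 2ℓ·L^{ℓ−1}(2T(m) + (n+4−2ℓ)m); (ii) T∘L = L∘T − 2L. Let k ∈ ℕ, let w, w′ ∈ ℝ, let f ∈ R satisfy T(f) = w′·f, let u ∈ R satisfy T(u) = (w−2)·u, and let a₀, …, a_k be arbitrary real numbers. Then Σ_{j=0}^{k} a_j·L^{k−j}(f·L^{j}(q·u)) − q·Σ_{j=0}^{k} a_j·L^{k−j}(f·L^{j}(u)) = Σ_{j=0}^{k−1} b_j·L^{k−j−1}(f·L^{j}(u)), where b_j := 2(j+1)(n+2w−2j−2)a_{j+1} − 2(k−j)(2j+2k−2w−2w′−n)a_j. -/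
/-!
Write `v_j = L^j u`. Hypothesis (ii) makes `L` lower `T`-weights by `2`, so `v_j` and `f * v_j`
are `T`-eigenvectors, and on a `T`-eigenvector hypothesis (i) collapses to a multiple of `L^{ℓ-1}`.
Commuting `q` first through `L^j` and then through `L^{k-j}` splits the `j`-th term of the
commutator into a multiple of `L^{k-j}(f v_{j-1})` and one of `L^{k-j-1}(f v_j)`; shifting the
index of the first family by one collects both into the coefficients `b_j`.
-/

theorem Finset.sum_range_succ_add_eq_sum_range_shift {M : Type*} [AddCommMonoid M]
    (F G : ℕ → M) (k : ℕ) (hF : F 0 = 0) (hG : G k = 0) :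
    ∑ j ∈ Finset.range (k + 1), (F j + G j) = ∑ j ∈ Finset.range k, (F (j + 1) + G j) := by
  rw [Finset.sum_add_distrib, Finset.sum_range_succ' F, Finset.sum_range_succ G, hF, hG,
    add_zero, add_zero, Finset.sum_add_distrib]

section WeightCalculus

variable {R : Type*} [CommRing R] [Algebra ℝ R] {L T : R →ₗ[ℝ] R}

theorem weight_pow_apply {d c : ℝ} (hTL : T ∘ₗ L = L ∘ₗ T - d • L) {x : R} (hx : T x = c • x)
    (j : ℕ) : T ((L ^ j) x) = (c - j * d) • (L ^ j) x := by
  induction j with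
  | zero => simpa using hx
  | succ j ih =>
    have hcomm := LinearMap.congr_fun hTL ((L ^ j) x)
    simp only [LinearMap.comp_apply, LinearMap.sub_apply, LinearMap.smul_apply] at hcomm
    rw [pow_succ', Module.End.mul_apply, hcomm, ih, map_smul, ← sub_smul]
    push_cast
    module

theorem weight_mul (hT : ∀ a b : R, T (a * b) = T a * b + a * T b) {x y : R} {c c' : ℝ}
    (hx : T x = c • x) (hy : T y = c' • y) : T (x * y) = (c + c') • (x * y) := by
  rw [hT, hx, hy, smul_mul_assoc, mul_smul_comm, add_smul]

theorem pow_apply_mul_of_weight {q : R} {n c : ℝ}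
    (hi : ∀ ℓ : ℕ, 1 ≤ ℓ → ∀ m : R,
      (L ^ ℓ) (q * m) - q * (L ^ ℓ) m =
        (2 * (ℓ : ℝ)) • (L ^ (ℓ - 1)) ((2 : ℝ) • T m + (n + 4 - 2 * (ℓ : ℝ)) • m))
    {m : R} (hm : T m = c • m) (ℓ : ℕ) :
    (L ^ ℓ) (q * m) = q * (L ^ ℓ) m + (2 * ℓ * (n + 4 + 2 * c - 2 * ℓ)) • (L ^ (ℓ - 1)) m := by
  rcases Nat.eq_zero_or_pos ℓ with rfl | hℓ
  · simp
  · rw [← sub_eq_iff_eq_add', hi ℓ hℓ, hm, smul_smul, ← add_smul, map_smul, smul_smul]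
    module

theorem pow_apply_mul_pow_apply_mul_sub {q f u : R} {n w w' : ℝ}
    (hT : ∀ a b : R, T (a * b) = T a * b + a * T b)
    (hi : ∀ ℓ : ℕ, 1 ≤ ℓ → ∀ m : R,
      (L ^ ℓ) (q * m) - q * (L ^ ℓ) m =
        (2 * (ℓ : ℝ)) • (L ^ (ℓ - 1)) ((2 : ℝ) • T m + (n + 4 - 2 * (ℓ : ℝ)) • m))
    (hii : T ∘ₗ L = L ∘ₗ T - (2 : ℝ) • L) (hf : T f = w' • f) (hu : T u = (w - 2) • u)
    (ℓ j : ℕ) :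
    (L ^ ℓ) (f * (L ^ j) (q * u)) - q * (L ^ ℓ) (f * (L ^ j) u)
      = (2 * j * (n + 2 * w - 2 * j)) • (L ^ ℓ) (f * (L ^ (j - 1)) u)
        + (2 * ℓ * (n + 2 * w + 2 * w' - 4 * j - 2 * ℓ)) • (L ^ (ℓ - 1)) (f * (L ^ j) u) := by
  have hfv : T (f * (L ^ j) u) = (w' + (w - 2 - j * 2)) • (f * (L ^ j) u) :=
    weight_mul hT hf (weight_pow_apply hii hu j)
  rw [pow_apply_mul_of_weight hi hu, mul_add, mul_left_comm, mul_smul_comm, map_add, map_smul,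
    pow_apply_mul_of_weight hi hfv]
  module

end WeightCalculus

/-- The displayed commutator computation in the proof of the construction lemma
(Lemma 2.3): for arbitrary coefficients `a j`,
`Σ a_j L^{k-j}(f·L^j(q·u)) - q·Σ a_j L^{k-j}(f·L^j u) = Σ b_j L^{k-j-1}(f·L^j u)`. -/
theorem commutator_computation {R : Type*} [CommRing R] [Algebra ℝ R]
    (L T : R →ₗ[ℝ] R) (q : R) (n : ℝ)
    (hT : ∀ a b : R, T (a * b) = T a * b + a * T b)
    (hi : ∀ ℓ : ℕ, 1 ≤ ℓ → ∀ m : R,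
      (L ^ ℓ) (q * m) - q * (L ^ ℓ) m =
        (2 * (ℓ : ℝ)) • (L ^ (ℓ - 1)) ((2 : ℝ) • T m + (n + 4 - 2 * (ℓ : ℝ)) • m))
    (hii : T ∘ₗ L = L ∘ₗ T - (2 : ℝ) • L)
    (k : ℕ) (w w' : ℝ) (f : R) (hf : T f = w' • f) (u : R) (hu : T u = (w - 2) • u)
    (a : ℕ → ℝ) :
    (∑ j ∈ Finset.range (k + 1), a j • (L ^ (k - j)) (f * (L ^ j) (q * u)))
      - q * ∑ j ∈ Finset.range (k + 1), a j • (L ^ (k - j)) (f * (L ^ j) u)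
    = ∑ j ∈ Finset.range k,
        (2 * ((j : ℝ) + 1) * (n + 2 * w - 2 * (j : ℝ) - 2) * a (j + 1)
          - 2 * ((k : ℝ) - (j : ℝ)) * (2 * (j : ℝ) + 2 * (k : ℝ) - 2 * w - 2 * w' - n) * a j)
          • (L ^ (k - j - 1)) (f * (L ^ j) u) := by
  rw [Finset.mul_sum, ← Finset.sum_sub_distrib]
  simp_rw [mul_smul_comm, ← smul_sub,
    pow_apply_mul_pow_apply_mul_sub hT hi hii hf hu (k - _), smul_add]
  rw [Finset.sum_range_succ_add_eq_sum_range_shift _ _ k (by simp) (by simp)]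
  refine Finset.sum_congr rfl fun j hj => ?_
  have hjk : j < k := Finset.mem_range.mp hj
  rw [Nat.sub_sub, Nat.add_sub_cancel, smul_smul, smul_smul, ← add_smul]
  congr 1
  push_cast [Nat.cast_sub hjk.le]
  ring
end

section
/- Let n, w, w′ be real numbers, let k ∈ ℕ, and for 0 ≤ j ≤ k define a_j := C(k,j)·Γ(j+k−w−w′−n/2)·Γ(n/2+w−j) / (Γ(k−w−w′−n/2)·Γ(n/2+w−k)), where C(k,j) is the binomial coefficient and Γ is the real Gamma function. If j < k and both (k−w−w′−n/2)+j ≠ 0 and n/2+w−j−1 ≠ 0, then 2(j+1)(n+2w−2j−2)·a_{j+1} = 2(k−j)(2j+2k−2w−2w′−n)·a_j; in particular the quantities b_j := 2(j+1)(n+2w−2j−2)a_{j+1} − 2(k−j)(2j+2k−2w−2w′−n)a_j all vanish. -/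
open Real

theorem Nat.cast_succ_mul_choose_succ {R : Type*} [Ring R] (k j : ℕ) :
    ((j : R) + 1) * (k.choose (j + 1) : R) = ((k : R) - j) * k.choose j := by
  rcases le_or_gt j k with hjk | hkj
  · have h := congrArg (Nat.cast : ℕ → R) (Nat.choose_succ_right_eq k j)
    push_cast [Nat.cast_sub hjk] at h
    rw [← Nat.cast_comm, h, Nat.cast_comm]
  · simp [Nat.choose_eq_zero_of_lt hkj, Nat.choose_eq_zero_of_lt (Nat.lt_succ_of_lt hkj)]

/-- The coefficient `a_j` without its `j`-independent denominator `Γ(A) Γ(B - k)`. -/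
noncomputable def gammaCoeff (A B : ℝ) (k j : ℕ) : ℝ :=
  k.choose j * Gamma (A + j) * Gamma (B - j)

theorem gammaCoeff_succ (A B : ℝ) (k j : ℕ) (hA : A + j ≠ 0) (hB : B - j - 1 ≠ 0) :
    ((j : ℝ) + 1) * (B - j - 1) * gammaCoeff A B k (j + 1)
      = ((k : ℝ) - j) * (A + j) * gammaCoeff A B k j := by
  have hΓA : Gamma (A + (j + 1 : ℕ)) = (A + j) * Gamma (A + j) := by
    rw [Nat.cast_succ, ← add_assoc, Gamma_add_one hA]
  have hΓB : Gamma (B - j) = (B - j - 1) * Gamma (B - (j + 1 : ℕ)) := by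
    rw [Nat.cast_succ, ← sub_sub, ← Gamma_add_one hB, sub_add_cancel]
  simp only [gammaCoeff, hΓA, hΓB]
  linear_combination (A + j) * (B - j - 1) * Gamma (A + j) * Gamma (B - (j + 1 : ℕ)) *
    Nat.cast_succ_mul_choose_succ (R := ℝ) k j

/-- The recursion satisfied by the coefficients `a_j` of the construction lemma
(Lemma 2.3), whence the quantities `b_j` all vanish. -/
theorem coefficient_recursion (n w w' : ℝ) (k : ℕ)
    (a : ℕ → ℝ)
    (ha : ∀ j : ℕ, j ≤ k → a j =
      (Nat.choose k j : ℝ) *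
        (Real.Gamma ((j : ℝ) + (k : ℝ) - w - w' - n / 2) * Real.Gamma (n / 2 + w - (j : ℝ)))
        / (Real.Gamma ((k : ℝ) - w - w' - n / 2) * Real.Gamma (n / 2 + w - (k : ℝ))))
    (j : ℕ) (hjk : j < k)
    (h1 : ((k : ℝ) - w - w' - n / 2) + (j : ℝ) ≠ 0)
    (h2 : n / 2 + w - (j : ℝ) - 1 ≠ 0) :
    2 * ((j : ℝ) + 1) * (n + 2 * w - 2 * (j : ℝ) - 2) * a (j + 1)
      = 2 * ((k : ℝ) - (j : ℝ)) * (2 * (j : ℝ) + 2 * (k : ℝ) - 2 * w - 2 * w' - n) * a j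
    ∧ 2 * ((j : ℝ) + 1) * (n + 2 * w - 2 * (j : ℝ) - 2) * a (j + 1)
      - 2 * ((k : ℝ) - (j : ℝ)) * (2 * (j : ℝ) + 2 * (k : ℝ) - 2 * w - 2 * w' - n) * a j = 0 := by
  set A := (k : ℝ) - w - w' - n / 2 with hA
  set B := n / 2 + w
  set D := Gamma A * Gamma (B - k)
  have ha' : ∀ i ≤ k, a i = gammaCoeff A B k i / D := fun i hi => by
    rw [ha i hi, gammaCoeff, show (i : ℝ) + k - w - w' - n / 2 = A + i by rw [hA]; ring]
    ring
  have hmain : 2 * ((j : ℝ) + 1) * (n + 2 * w - 2 * (j : ℝ) - 2) * a (j + 1)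
      = 2 * ((k : ℝ) - (j : ℝ)) * (2 * (j : ℝ) + 2 * (k : ℝ) - 2 * w - 2 * w' - n) * a j := by
    rw [ha' (j + 1) hjk, ha' j hjk.le]
    linear_combination 4 / D * gammaCoeff_succ A B k j h1 h2
  exact ⟨hmain, sub_eq_zero.mpr hmain⟩
end

section
/- Let R be a commutative ℝ-algebra, let L : R → R be an ℝ-linear map, let T : R → R be an ℝ-linear derivation (T(ab) = T(a)b + aT(b)), let q ∈ R, and let n be a fixed real number. Assume: (i) for every integer ℓ ≥ 1 and every m ∈ R, L^ℓ(q·m) − q·L^ℓ(m) = 2ℓ·L^{ℓ−1}(2T(m) + (n+4−2ℓ)m); (ii) T∘L = L∘T − 2L. Let k ∈ ℕ, set w := −(n−2k)/3, A := (n+4k)/6, B := (n−2k)/6, and assume B is not a nonpositive integer (i.e. B ≠ −m for every m ∈ ℕ). Define a_{r,s,t} := (k!/(r!·s!·t!))·Γ(A−r)·Γ(A−s)·Γ(A−t)/(Γ(B)·Γ(A)²) for r+s+t = k, where Γ is the real Gamma function. Then for every u ∈ R with T(u) = w·u and every m ∈ R with T(m) = (w−2)·m, one has Σ_{r+s+t=k}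 a_{r,s,t}·L^{r}((L^{s}u)·(L^{t}(q·m))) = q·Σ_{r+s+t=k} a_{r,s,t}·L^{r}((L^{s}u)·(L^{t}m)). -/
/-!
Write `F r s t = L^r (L^s u · L^t m)`. Since `L` lowers the `T`-weight by `2` and `T` is a
derivation, every argument met below is a `T`-eigenvector, so relation (i) moves `q` first past
`L^t` and then past `L^r`:
`L^r (L^s u · L^t (q m)) = q F r s t - 4r(A-r) F (r-1) s t + 4t(A-t) F r s (t-1)`,
the weights `w`, `w - 2` being exactly those that make both coefficients of (i) of this form.
Summed over `r + s + t = k`, the two error sums cancel after shifting `r` and `t` down by one: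
`a r s t` is `k! / (Γ(B) Γ(A)²)` times `g r * g s * g t` with `g j = Γ(A - j) / j!`, and
`Γ(x + 1) = x Γ(x)` gives `(j + 1)(A - j - 1) g (j + 1) = g j` as long as
`A - j - 1 = B + (k - j - 1) ≠ 0`.
-/

open Finset

section Lowering

variable {𝕜 M : Type*} [CommRing 𝕜] [AddCommGroup M] [Module 𝕜 M] {L T : Module.End 𝕜 M} {c : 𝕜}

theorem Module.End.mul_pow_eq_of_mul_eq_sub_smul (h : T * L = L * T - c • L) (j : ℕ) :
    T * L ^ j = L ^ j * T - (j * c) • L ^ j := by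
  induction j with
  | zero => simp
  | succ j ih =>
    rw [pow_succ, ← mul_assoc, ih, sub_mul, mul_assoc, h, mul_sub, smul_mul_assoc, mul_smul_comm,
      ← mul_assoc, ← pow_succ]
    push_cast
    module

theorem Module.End.apply_pow_apply_of_apply_eq_smul (h : T * L = L * T - c • L) {x : M} {μ : 𝕜}
    (hx : T x = μ • x) (j : ℕ) : T ((L ^ j) x) = (μ - j * c) • (L ^ j) x := by
  have := congr($(Module.End.mul_pow_eq_of_mul_eq_sub_smul h j) x)
  simp only [Module.End.mul_apply, LinearMap.sub_apply, LinearMap.smul_apply, hx, map_smul] at this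
  rw [this, sub_smul]

end Lowering

section Commutator

variable {𝕜 R : Type*} [CommRing 𝕜]

theorem apply_mul_of_apply_eq_smul [Semiring R] [Algebra 𝕜 R] {T : R →ₗ[𝕜] R}
    (hT : ∀ a b : R, T (a * b) = T a * b + a * T b) {x y : R} {μ ν : 𝕜}
    (hx : T x = μ • x) (hy : T y = ν • y) : T (x * y) = (μ + ν) • (x * y) := by
  rw [hT, hx, hy, smul_mul_assoc, mul_smul_comm, add_smul]

theorem pow_apply_mul_of_apply_eq_smul [Ring R] [Algebra 𝕜 R] {L T : R →ₗ[𝕜] R} {q : R} {n : 𝕜}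
    (hi : ∀ ℓ : ℕ, 1 ≤ ℓ → ∀ m : R,
      (L ^ ℓ) (q * m) - q * (L ^ ℓ) m =
        (2 * (ℓ : 𝕜)) • (L ^ (ℓ - 1)) ((2 : 𝕜) • T m + (n + 4 - 2 * (ℓ : 𝕜)) • m))
    {x : R} {μ : 𝕜} (hx : T x = μ • x) (ℓ : ℕ) :
    (L ^ ℓ) (q * x) = q * (L ^ ℓ) x + (2 * ℓ * (2 * μ + n + 4 - 2 * ℓ)) • (L ^ (ℓ - 1)) x := by
  rcases ℓ.eq_zero_or_pos with rfl | hℓ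
  · simp
  · rw [← sub_eq_iff_eq_add', hi ℓ hℓ, hx, smul_smul, ← add_smul, map_smul, smul_smul]
    ring_nf

theorem pow_apply_mul_pow_apply_mul_of_apply_eq_smul [CommRing R] [Algebra 𝕜 R]
    {L T : R →ₗ[𝕜] R} {q : R} {n c : 𝕜}
    (hT : ∀ a b : R, T (a * b) = T a * b + a * T b)
    (hi : ∀ ℓ : ℕ, 1 ≤ ℓ → ∀ m : R,
      (L ^ ℓ) (q * m) - q * (L ^ ℓ) m =
        (2 * (ℓ : 𝕜)) • (L ^ (ℓ - 1)) ((2 : 𝕜) • T m + (n + 4 - 2 * (ℓ : 𝕜)) • m))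
    (hLT : T * L = L * T - c • L) {x y : R} {μ ν : 𝕜} (hx : T x = μ • x) (hy : T y = ν • y)
    (r s t : ℕ) :
    (L ^ r) ((L ^ s) x * (L ^ t) (q * y)) =
      q * (L ^ r) ((L ^ s) x * (L ^ t) y)
        + (2 * r * (2 * (μ - s * c + (ν - t * c)) + n + 4 - 2 * r)) •
            (L ^ (r - 1)) ((L ^ s) x * (L ^ t) y)
        + (2 * t * (2 * ν + n + 4 - 2 * t)) • (L ^ r) ((L ^ s) x * (L ^ (t - 1)) y) := by
  have hxy := apply_mul_of_apply_eq_smul hT (Module.End.apply_pow_apply_of_apply_eq_smul hLT hx s)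
    (Module.End.apply_pow_apply_of_apply_eq_smul hLT hy t)
  rw [pow_apply_mul_of_apply_eq_smul hi hy t, mul_add, mul_left_comm ((L ^ s) x) q, mul_smul_comm,
    map_add, map_smul, pow_apply_mul_of_apply_eq_smul hi hxy r]

end Commutator

section TripleSum

variable {M : Type*} [AddCommMonoid M] {k : ℕ}

def tripleSum (k : ℕ) (f : ℕ → ℕ → ℕ → M) : M :=
  ∑ r ∈ range (k + 1), ∑ s ∈ range (k + 1 - r), f r s (k - r - s)

theorem tripleSum_congr {f g : ℕ → ℕ → ℕ → M} (h : ∀ r s t, r + s + t = k → f r s t = g r s t) :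
    tripleSum k f = tripleSum k g := by
  refine sum_congr rfl fun r hr => sum_congr rfl fun s hs => h r s _ ?_
  simp only [mem_range] at hr hs
  omega

theorem tripleSum_add (f g : ℕ → ℕ → ℕ → M) :
    tripleSum k (fun r s t => f r s t + g r s t) = tripleSum k f + tripleSum k g := by
  simp only [tripleSum, sum_add_distrib]

theorem mul_tripleSum {R : Type*} [NonUnitalNonAssocSemiring R] (q : R) (f : ℕ → ℕ → ℕ → R) :
    q * tripleSum k f = tripleSum k fun r s t => q * f r s t := by
  simp only [tripleSum, mul_sum]

theorem tripleSum_succ_of_first_eq_zero {f : ℕ → ℕ → ℕ → M} (h : ∀ s t, f 0 s t = 0) :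
    tripleSum (k + 1) f = tripleSum k fun r s t => f (r + 1) s t := by
  simp [tripleSum, sum_range_succ' _ (k + 1), h]

theorem tripleSum_succ_of_third_eq_zero {f : ℕ → ℕ → ℕ → M} (h : ∀ r s, f r s 0 = 0) :
    tripleSum (k + 1) f = tripleSum k fun r s t => f r s (t + 1) := by
  rw [tripleSum, tripleSum, sum_range_succ, Nat.add_sub_cancel_left, sum_range_one, Nat.sub_self, h,
    add_zero]
  refine sum_congr rfl fun r hr => ?_
  rw [mem_range] at hr
  rw [show k + 1 + 1 - r = k + 1 - r + 1 by omega, sum_range_succ, Nat.sub_self, h, add_zero]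
  refine sum_congr rfl fun s hs => ?_
  rw [mem_range] at hs
  rw [show k + 1 - r - s = k - r - s + 1 by omega]

theorem tripleSum_add_eq_zero_of_shift {f g : ℕ → ℕ → ℕ → M} (hf : ∀ s t, f 0 s t = 0)
    (hg : ∀ r s, g r s 0 = 0) (h : ∀ r s t, r + s + t + 1 = k → f (r + 1) s t + g r s (t + 1) = 0) :
    tripleSum k f + tripleSum k g = 0 := by
  cases k with
  | zero => simp [tripleSum, hf, hg]
  | succ k =>
    rw [tripleSum_succ_of_first_eq_zero hf, tripleSum_succ_of_third_eq_zero hg, ← tripleSum_add]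
    exact (tripleSum_congr fun r s t hk => h r s t (by omega)).trans (by simp [tripleSum])

end TripleSum

namespace OvsienkoRedou

noncomputable def gammaRatio (A : ℝ) (j : ℕ) : ℝ := Real.Gamma (A - j) / j.factorial

theorem gammaRatio_succ {A : ℝ} {j : ℕ} (h : A - (j + 1) ≠ 0) :
    (j + 1) * (A - (j + 1)) * gammaRatio A (j + 1) = gammaRatio A j := by
  have hΓ := Real.Gamma_add_one h
  rw [show A - (j + 1) + 1 = A - j by ring] at hΓ
  simp only [gammaRatio, Nat.factorial_succ]
  push_cast
  rw [hΓ]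
  field_simp

noncomputable def coeff (k : ℕ) (A B : ℝ) (r s t : ℕ) : ℝ :=
  ((k.factorial : ℝ) / ((r.factorial : ℝ) * (s.factorial : ℝ) * (t.factorial : ℝ)))
    * (Real.Gamma (A - (r : ℝ)) * Real.Gamma (A - (s : ℝ)) * Real.Gamma (A - (t : ℝ)))
    / (Real.Gamma B * Real.Gamma A ^ 2)

theorem coeff_eq (k : ℕ) (A B : ℝ) (r s t : ℕ) :
    coeff k A B r s t = k.factorial / (Real.Gamma B * Real.Gamma A ^ 2) *
      (gammaRatio A r * gammaRatio A s * gammaRatio A t) := by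
  simp only [coeff, gammaRatio]
  ring

theorem sub_succ_ne_zero {A B : ℝ} {k j : ℕ} (hAB : A = B + k) (hB : ∀ m : ℕ, B ≠ -m)
    (hj : j < k) : A - (j + 1) ≠ 0 := by
  intro h
  apply hB (k - (j + 1))
  rw [Nat.cast_sub hj]
  push_cast
  linear_combination h - hAB

theorem coeff_succ_first_mul {k : ℕ} {A B : ℝ} {r s t : ℕ} (hAB : A = B + k)
    (hB : ∀ m : ℕ, B ≠ -m) (hk : r + s + t + 1 = k) :
    coeff k A B (r + 1) s t * ((r + 1) * (A - (r + 1))) =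
      coeff k A B r s (t + 1) * ((t + 1) * (A - (t + 1))) := by
  rw [coeff_eq, coeff_eq, ← gammaRatio_succ (sub_succ_ne_zero hAB hB (j := r) (by omega)),
    ← gammaRatio_succ (sub_succ_ne_zero hAB hB (j := t) (by omega))]
  ring

end OvsienkoRedou

/-- The algebraic content of Corollary 2.4: the ambient curved Ovsienko–Redou
operator commutes with multiplication by `q` on elements of weight `w - 2`. -/
theorem ovsienko_redou_tangential {R : Type*} [CommRing R] [Algebra ℝ R]
    (L T : R →ₗ[ℝ] R) (q : R) (n : ℝ)
    (hT : ∀ a b : R, T (a * b) = T a * b + a * T b)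
    (hi : ∀ ℓ : ℕ, 1 ≤ ℓ → ∀ m : R,
      (L ^ ℓ) (q * m) - q * (L ^ ℓ) m =
        (2 * (ℓ : ℝ)) • (L ^ (ℓ - 1)) ((2 : ℝ) • T m + (n + 4 - 2 * (ℓ : ℝ)) • m))
    (hii : T ∘ₗ L = L ∘ₗ T - (2 : ℝ) • L)
    (k : ℕ) (w A B : ℝ)
    (hw : w = -(n - 2 * (k : ℝ)) / 3)
    (hA : A = (n + 4 * (k : ℝ)) / 6) (hB : B = (n - 2 * (k : ℝ)) / 6)
    (hBint : ∀ m : ℕ, B ≠ -(m : ℝ))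
    (a : ℕ → ℕ → ℕ → ℝ)
    (ha : ∀ r s t : ℕ, r + s + t = k → a r s t =
      ((k.factorial : ℝ) / ((r.factorial : ℝ) * (s.factorial : ℝ) * (t.factorial : ℝ)))
        * (Real.Gamma (A - (r : ℝ)) * Real.Gamma (A - (s : ℝ)) * Real.Gamma (A - (t : ℝ)))
        / (Real.Gamma B * Real.Gamma A ^ 2))
    (u : R) (hu : T u = w • u) (m : R) (hm : T m = (w - 2) • m) :
    ∑ r ∈ Finset.range (k + 1), ∑ s ∈ Finset.range (k + 1 - r),
        a r s (k - r - s) • (L ^ r) ((L ^ s) u * (L ^ (k - r - s)) (q * m))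
      = q * ∑ r ∈ Finset.range (k + 1), ∑ s ∈ Finset.range (k + 1 - r),
          a r s (k - r - s) • (L ^ r) ((L ^ s) u * (L ^ (k - r - s)) m) := by
  have hAB : A = B + k := by linear_combination hA - hB
  have ha' : ∀ r s t, r + s + t = k → a r s t = OvsienkoRedou.coeff k A B r s t := ha
  have hterm : ∀ r s t, r + s + t = k →
      a r s t • (L ^ r) ((L ^ s) u * (L ^ t) (q * m)) =
        q * (a r s t • (L ^ r) ((L ^ s) u * (L ^ t) m))
          + (-(a r s t * (4 * r * (A - r)))) • (L ^ (r - 1)) ((L ^ s) u * (L ^ t) m)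
          + (a r s t * (4 * t * (A - t))) • (L ^ r) ((L ^ s) u * (L ^ (t - 1)) m) := by
    intro r s t hk
    have hk' : (r + s + t : ℝ) = k := by exact_mod_cast hk
    rw [pow_apply_mul_pow_apply_mul_of_apply_eq_smul hT hi hii hu hm, smul_add, smul_add,
      mul_smul_comm, smul_smul, smul_smul]
    congr 3
    · linear_combination a r s t * r * (8 * hw + 4 * hA - 8 * hk')
    · linear_combination 4 * t * hw - 4 * t * hA
  show tripleSum k (fun r s t => a r s t • (L ^ r) ((L ^ s) u * (L ^ t) (q * m))) =
    q * tripleSum k (fun r s t => a r s t • (L ^ r) ((L ^ s) u * (L ^ t) m))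
  rw [tripleSum_congr hterm, tripleSum_add, tripleSum_add, mul_tripleSum, add_assoc,
    tripleSum_add_eq_zero_of_shift (by simp) (by simp), add_zero]
  intro r s t hk
  rw [ha' _ _ _ (by omega), ha' _ _ _ (by omega), Nat.add_sub_cancel, Nat.add_sub_cancel,
    ← add_smul]
  push_cast
  convert zero_smul ℝ _
  linear_combination (-4) * OvsienkoRedou.coeff_succ_first_mul hAB hBint hk
end

section
/- Fix real numbers n and w, and for each j ∈ ℕ define the polynomial p_{j,w}(X) := ∏_{i=0}^{j−1} (X − (w−2i)(n+w−2i)) in ℝ[X]. Then for every integer j ≥ 1 one has p_{j, w−2} = p_{j,w} + 2j(n+2w−2j)·p_{j−1, w−2} in ℝ[X]. -/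
/-!
Both `p_{j,w-2}` and `p_{j,w}` contain the `j - 1` factors of `p_{j-1,w-2}`: the former
multiplies them by its last factor `X - (w-2j)(n+w-2j)`, the latter by its first factor
`X - w(n+w)`. The two constants differ by `w(n+w) - (w-2j)(n+w-2j) = 2j(n+2w-2j)`.
-/

/-- The polynomial `p_{j,w}(X) = ∏_{i=0}^{j-1} (X - (w-2i)(n+w-2i))` encoding the
operator `P_{2j,w} = ∏_{i=0}^{j-1} (Δ_{g₊} - (w-2i)(n+w-2i))` on the Poincaré space. -/
noncomputable def poincarePoly (n : ℝ) (j : ℕ) (w : ℝ) : Polynomial ℝ :=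
  ∏ i ∈ Finset.range j,
    (Polynomial.X - Polynomial.C ((w - 2 * (i : ℝ)) * (n + w - 2 * (i : ℝ))))

open Polynomial

lemma poincarePoly_succ (n : ℝ) (j : ℕ) (w : ℝ) :
    poincarePoly n (j + 1) w
      = poincarePoly n j w * (X - C ((w - 2 * (j : ℝ)) * (n + w - 2 * (j : ℝ)))) :=
  Finset.prod_range_succ _ j

lemma poincarePoly_succ_eq_mul_sub_two (n : ℝ) (j : ℕ) (w : ℝ) :
    poincarePoly n (j + 1) w = poincarePoly n j (w - 2) * (X - C (w * (n + w))) := by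
  rw [poincarePoly, Finset.prod_range_succ', poincarePoly]
  congr 1
  · refine Finset.prod_congr rfl fun i _ => ?_
    push_cast
    ring_nf
  · simp

/-- The recursion `P_{2j,w-2} = P_{2j,w} + 2j(n+2w-2j) P_{2j-2,w-2}` from the
proof of Lemma 3.1. -/
theorem poincarePoly_recursion (n w : ℝ) :
    ∀ j : ℕ, 1 ≤ j →
      poincarePoly n j (w - 2)
        = poincarePoly n j w
          + (2 * (j : ℝ) * (n + 2 * w - 2 * (j : ℝ))) • poincarePoly n (j - 1) (w - 2) := by
  rintro (_ | k) hk
  · omega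
  have last_factor : X - C ((w - 2 - 2 * (k : ℝ)) * (n + (w - 2) - 2 * (k : ℝ)))
      = (X - C (w * (n + w))) + C (2 * ((k : ℝ) + 1) * (n + 2 * w - 2 * ((k : ℝ) + 1))) := by
    rw [sub_add, ← C_sub]
    ring_nf
  rw [poincarePoly_succ, poincarePoly_succ_eq_mul_sub_two, last_factor, Nat.add_sub_cancel,
    smul_eq_C_mul]
  push_cast
  ring
end

section
/- Fix real numbers n and w, and for each j ∈ ℕ define the polynomial p_{j,w}(X) := ∏_{i=0}^{j−1} (X − (w−2i)(n+w−2i)) in ℝ[X]. Then for every j ∈ ℕ one has p_{j, w−2} = Σ_{i=0}^{j} 4^i·(j!/(j−i)!)·(n/2+w−j)_i·p_{j−i, w} in ℝ[X], where (x)_i := x(x+1)⋯(x+i−1) denotes the ascending Pochhammer symbol evaluated at the real number x = n/2+w−j. -/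
open Finset Polynomial Lagrange

section NewtonBasis

variable {R : Type*} [CommRing R]

theorem nodal_range_mul_X_sub_C (a : ℕ → R) (k : ℕ) (b : R) :
    nodal (range k) a * (X - C b) = nodal (range (k + 1)) a + (a k - b) • nodal (range k) a := by
  rw [nodal, nodal, prod_range_succ, smul_eq_C_mul, map_sub]
  ring

theorem nodal_range_eq_sum_smul_nodal_range (a b : ℕ → R) (c : ℕ → ℕ → R)
    (hc_zero : ∀ j, c j 0 = 1)
    (hc_succ : ∀ j i, i < j → c (j + 1) (i + 1) = c j (i + 1) + c j i * (a (j - i) - b j))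
    (hc_diag : ∀ j, c (j + 1) (j + 1) = c j j * (a 0 - b j)) (j : ℕ) :
    nodal (range j) b = ∑ i ∈ range (j + 1), c j i • nodal (range (j - i)) a := by
  induction j with
  | zero => simp [nodal, hc_zero]
  | succ j ih =>
    have expand : nodal (range (j + 1)) b
        = ∑ i ∈ range (j + 1), (c j i • nodal (range (j + 1 - i)) a
            + (c j i * (a (j - i) - b j)) • nodal (range (j - i)) a) := by
      rw [nodal, prod_range_succ, ← nodal, ih, sum_mul]
      refine sum_congr rfl fun i hi => ?_
      rw [smul_mul_assoc, nodal_range_mul_X_sub_C, smul_add, smul_smul,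
        Nat.sub_add_comm (Nat.lt_succ_iff.mp (mem_range.mp hi))]
    have middle : ∀ i ∈ range j, c (j + 1) (i + 1) • nodal (range (j - i)) a
        = c j (i + 1) • nodal (range (j - i)) a
          + (c j i * (a (j - i) - b j)) • nodal (range (j - i)) a := by
      intro i hi
      rw [hc_succ j i (mem_range.mp hi), add_smul]
    rw [expand, sum_add_distrib, sum_range_succ', sum_range_succ _ j, sum_range_succ',
      sum_range_succ _ j]
    simp only [Nat.add_sub_add_right, Nat.sub_self, Nat.sub_zero]
    rw [sum_congr rfl middle, sum_add_distrib, hc_diag, hc_zero, hc_zero]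
    abel

end NewtonBasis

theorem ascPochhammer_succ_eval_left {S : Type*} [CommSemiring S] (n : ℕ) (x : S) :
    (ascPochhammer S (n + 1)).eval x = x * (ascPochhammer S n).eval (x + 1) := by
  rw [ascPochhammer_succ_left, eval_mul, eval_X, eval_comp, eval_add, eval_X, eval_one]

section Poincare

variable (n w : ℝ)

def poincareRoot (k : ℕ) : ℝ := (w - 2 * k) * (n + w - 2 * k)

theorem poincareRoot_sub_poincareRoot (k l : ℕ) :
    poincareRoot n w k - poincareRoot n (w - 2) l = 4 * (l + 1 - k) * (n / 2 + w - k - l - 1) := by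
  simp only [poincareRoot]
  ring

noncomputable def expansionCoeff (j i : ℕ) : ℝ :=
  4 ^ i * ((j.factorial : ℝ) / ((j - i).factorial : ℝ))
    * (ascPochhammer ℝ i).eval (n / 2 + w - j)

theorem expansionCoeff_zero_right (j : ℕ) : expansionCoeff n w j 0 = 1 := by
  simp [expansionCoeff, (Nat.factorial_pos j).ne']

theorem expansionCoeff_succ_succ {j i : ℕ} (hij : i < j) :
    expansionCoeff n w (j + 1) (i + 1) = expansionCoeff n w j (i + 1)
      + expansionCoeff n w j i * (poincareRoot n w (j - i) - poincareRoot n (w - 2) j) := by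
  obtain ⟨m, rfl⟩ : ∃ m, j = i + m + 1 := ⟨j - i - 1, by omega⟩
  have hsub₁ : i + m + 1 + 1 - (i + 1) = m + 1 := by omega
  have hsub₂ : i + m + 1 - (i + 1) = m := by omega
  have hsub₃ : i + m + 1 - i = m + 1 := by omega
  simp only [expansionCoeff, poincareRoot_sub_poincareRoot, hsub₁, hsub₂, hsub₃]
  have hx : n / 2 + w - ↑(i + m + 1 + 1) = (n / 2 + w - ↑(i + m + 1)) - 1 := by
    push_cast; ring
  rw [hx, ascPochhammer_succ_eval_left, sub_add_cancel, ascPochhammer_succ_eval,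
    Nat.factorial_succ (i + m + 1), Nat.factorial_succ m]
  have hm : (m.factorial : ℝ) ≠ 0 := by positivity
  push_cast
  field_simp
  ring

theorem expansionCoeff_succ_self (j : ℕ) :
    expansionCoeff n w (j + 1) (j + 1)
      = expansionCoeff n w j j * (poincareRoot n w 0 - poincareRoot n (w - 2) j) := by
  simp only [expansionCoeff, poincareRoot_sub_poincareRoot, Nat.sub_self]
  have hx : n / 2 + w - ↑(j + 1) = (n / 2 + w - j) - 1 := by push_cast; ring
  rw [hx, ascPochhammer_succ_eval_left, sub_add_cancel, Nat.factorial_succ]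
  push_cast
  ring

end Poincare

/-- Equation (3.6) of the paper:
`P_{2j,w-2} = Σ_{i=0}^{j} 4^i (j!/(j-i)!) (n/2+w-j)_i P_{2j-2i,w}`, with the
Gamma ratio written as an ascending Pochhammer symbol. -/
theorem poincarePoly_expansion (n w : ℝ) :
    ∀ j : ℕ,
      poincarePoly n j (w - 2)
        = ∑ i ∈ Finset.range (j + 1),
            ((4 : ℝ) ^ i * ((j.factorial : ℝ) / ((j - i).factorial : ℝ))
              * (ascPochhammer ℝ i).eval (n / 2 + w - (j : ℝ)))
              • poincarePoly n (j - i) w :=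
  -- `poincarePoly n j w` is by definition `nodal (range j) (poincareRoot n w)`
  nodal_range_eq_sum_smul_nodal_range (poincareRoot n w) (poincareRoot n (w - 2))
    (expansionCoeff n w) (expansionCoeff_zero_right n w)
    (fun _ _ => expansionCoeff_succ_succ n w) (expansionCoeff_succ_self n w)
end

section
/- Fix real numbers n and w, and for each j ∈ ℕ define the polynomial p_{j,v}(X) := ∏_{i=0}^{j−1}(X − (v−2i)(n+v−2i)) ∈ ℝ[X]. Let R be a commutative ℝ-algebra and let D : R → R be an ℝ-linear map; write P_{j,v} := p_{j,v}(D) for the evaluation of p_{j,v} at D. Then for every i ∈ ℕ and all φ, ψ ∈ R: φ·(P_{i,w}ψ) − ψ·(P_{i,w}φ) = Σ_{ℓ=1}^{i} [ (P_{i−ℓ, w−2ℓ}φ)·D(P_{ℓ−1, w}ψ) − D(P_{i−ℓ, w−2ℓ}φ)·(P_{ℓ−1, w}ψ) ]. -/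
open Polynomial

theorem Finset.sum_Icc_one_sub_pred {M : Type*} [AddCommGroup M] (f : ℕ → M) (n : ℕ) :
    ∑ ℓ ∈ Finset.Icc 1 n, (f ℓ - f (ℓ - 1)) = f n - f 0 := by
  induction n with
  | zero => simp
  | succ n ih =>
    rw [Finset.sum_Icc_succ_top (by omega), ih, Nat.add_sub_cancel]
    abel

theorem mul_apply_sub_apply_mul_sub_algebraMap {K R : Type*} [CommSemiring K] [CommRing R]
    [Algebra K R] (D : Module.End K R) (c : K) (x y : R) :
    x * (D - algebraMap K _ c) y - (D - algebraMap K _ c) x * y = x * D y - D x * y := by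
  simp only [LinearMap.sub_apply, Module.algebraMap_end_apply, Algebra.smul_def]
  ring

namespace poincarePoly

variable (n : ℝ)

theorem zero (v : ℝ) : poincarePoly n 0 v = 1 :=
  Finset.prod_range_zero _

theorem succ (k : ℕ) (v : ℝ) :
    poincarePoly n (k + 1) v = (X - C ((v - 2 * k) * (n + v - 2 * k))) * poincarePoly n k v := by
  rw [poincarePoly, Finset.prod_range_succ, mul_comm, poincarePoly]

theorem succ' (k : ℕ) (v : ℝ) :
    poincarePoly n (k + 1) v = (X - C (v * (n + v))) * poincarePoly n k (v - 2) := by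
  rw [poincarePoly, Finset.prod_range_succ', mul_comm, poincarePoly]
  congr 1
  · simp
  · refine Finset.prod_congr rfl fun i _ => ?_
    push_cast
    ring_nf

variable {R : Type*} [CommRing R] [Algebra ℝ R] (w : ℝ) (D : Module.End ℝ R)

theorem aeval_mul_apply_sub_apply_mul (j m : ℕ) (φ ψ : R) :
    aeval D (poincarePoly n j (w - 2 * (m + 1))) φ * D (aeval D (poincarePoly n m w) ψ)
        - D (aeval D (poincarePoly n j (w - 2 * (m + 1))) φ) * aeval D (poincarePoly n m w) ψ
      = aeval D (poincarePoly n j (w - 2 * (m + 1))) φ * aeval D (poincarePoly n (m + 1) w) ψ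
        - aeval D (poincarePoly n (j + 1) (w - 2 * m)) φ * aeval D (poincarePoly n m w) ψ := by
  have hv : w - 2 * m - 2 = w - 2 * (m + 1) := by ring
  have hc : n + (w - 2 * m) = n + w - 2 * m := by ring
  rw [succ, succ', hv, hc,
    ← mul_apply_sub_apply_mul_sub_algebraMap D ((w - 2 * m) * (n + w - 2 * m))]
  simp only [aeval_mul, aeval_X, aeval_C, map_sub, Module.End.mul_apply]

end poincarePoly

/-- The telescoping identity from the proof of Proposition 4.2:
`φ P_{2i,w}ψ - ψ P_{2i,w}φ = Σ_{ℓ=1}^{i} [(P_{2i-2ℓ,w-2ℓ}φ) D(P_{2ℓ-2,w}ψ)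
  - (D P_{2i-2ℓ,w-2ℓ}φ)(P_{2ℓ-2,w}ψ)]`. -/
theorem telescoping_identity {R : Type*} [CommRing R] [Algebra ℝ R]
    (n w : ℝ) (D : Module.End ℝ R)
    (P : ℕ → ℝ → Module.End ℝ R)
    (hP : ∀ j v, P j v = Polynomial.aeval D (poincarePoly n j v)) :
    ∀ (i : ℕ) (φ ψ : R),
      φ * (P i w) ψ - ψ * (P i w) φ
        = ∑ ℓ ∈ Finset.Icc 1 i,
            ((P (i - ℓ) (w - 2 * (ℓ : ℝ))) φ * D ((P (ℓ - 1) w) ψ)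
              - D ((P (i - ℓ) (w - 2 * (ℓ : ℝ))) φ) * (P (ℓ - 1) w) ψ) := by
  intro i φ ψ
  simp only [hP]
  let f (ℓ : ℕ) : R :=
    aeval D (poincarePoly n (i - ℓ) (w - 2 * ℓ)) φ * aeval D (poincarePoly n ℓ w) ψ
  have summand_eq : ∀ ℓ ∈ Finset.Icc 1 i,
      aeval D (poincarePoly n (i - ℓ) (w - 2 * ℓ)) φ * D (aeval D (poincarePoly n (ℓ - 1) w) ψ)
        - D (aeval D (poincarePoly n (i - ℓ) (w - 2 * ℓ)) φ) * aeval D (poincarePoly n (ℓ - 1) w) ψ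
      = f ℓ - f (ℓ - 1) := by
    intro ℓ hℓ
    rw [Finset.mem_Icc] at hℓ
    obtain ⟨m, rfl⟩ : ∃ m, ℓ = m + 1 := ⟨ℓ - 1, by omega⟩
    have hi : i - m = i - (m + 1) + 1 := by omega
    simp only [f, hi, Nat.add_sub_cancel, Nat.cast_add, Nat.cast_one]
    exact poincarePoly.aeval_mul_apply_sub_apply_mul n w D _ m φ ψ
  rw [Finset.sum_congr rfl summand_eq, Finset.sum_Icc_one_sub_pred]
  simp [f, poincarePoly.zero, mul_comm]
end
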